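/- arXiv:0803.0456 — 2 statements merged into one kernel-verified Lean document; each statement's English description precedes it below -/
import Mathlib

section
/- For every λ ∈ C, the operator Q(λ) = A_0 + λ A_1 + λ² A_2 on H¹(T²) is a Fredholm operator of index zero. -/
noncomputable section
open MeasureTheory Complex
open scoped InnerProductSpace

/-- The fundamental periodicity cell `Ω = (-π, π]²` of the lattice `2πℤ²`. -/
def Cell : Set (ℝ × ℝ) := Set.Ioc (-Real.pi) Real.pi ×ˢ Set.Ioc (-Real.pi) Real.pi

/-- `2πℤ²`-periodicity of a function on `ℝ²`, i.e. it is a function on the torus `T²`. -/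
def PeriodicT2 (f : ℝ × ℝ → ℂ) : Prop :=
  (∀ x : ℝ × ℝ, f (x.1 + 2 * Real.pi, x.2) = f x) ∧
  (∀ x : ℝ × ℝ, f (x.1, x.2 + 2 * Real.pi) = f x)

/-- The gradient `∇f = (∂₁ f, ∂₂ f)` of a function `f : ℝ² → ℂ`. -/
def gradF (f : ℝ × ℝ → ℂ) (x : ℝ × ℝ) : ℂ × ℂ :=
  (fderiv ℝ f x (1, 0), fderiv ℝ f x (0, 1))

/-- `H` is a model of the periodic Sobolev space `H¹(T²)`: `rep` realizes elements of `H`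
injectively as periodic functions on `ℝ²`, and the inner product of `H` is the `H¹` inner
product `(u,v) ↦ ∫_Ω u v̄ + ∇u · ∇v̄` (Mathlib convention: conjugate-linear in the first slot,
so `⟪v, u⟫` is linear in `u` and conjugate-linear in `v`). -/
structure IsH1TorusModel (H : Type) [NormedAddCommGroup H] [InnerProductSpace ℂ H]
    (rep : H →ₗ[ℂ] ((ℝ × ℝ) → ℂ)) : Prop where
  injective : Function.Injective rep
  periodic : ∀ u : H, PeriodicT2 (rep u)
  inner_eq : ∀ u v : H, ⟪v, u⟫_ℂ =
    ∫ x in Cell, rep u x * (starRingEnd ℂ) (rep v x)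
      + (gradF (rep u) x).1 * (starRingEnd ℂ) ((gradF (rep v) x).1)
      + (gradF (rep u) x).2 * (starRingEnd ℂ) ((gradF (rep v) x).2)

/-- The sesquilinear form `a₁(u,v) = 2i ∫_Ω u (k̂ · ∇v̄) dx` (linear in `u`,
conjugate-linear in `v`), for a fixed unit vector `k̂ = (k₁, k₂) ∈ ℝ²`. -/
def formA1 {H : Type} [NormedAddCommGroup H] [InnerProductSpace ℂ H]
    (rep : H →ₗ[ℂ] ((ℝ × ℝ) → ℂ)) (k1 k2 : ℝ) (u v : H) : ℂ :=
  2 * Complex.I * ∫ x in Cell, rep u x *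
    ((k1 : ℂ) * (starRingEnd ℂ) ((gradF (rep v) x).1)
      + (k2 : ℂ) * (starRingEnd ℂ) ((gradF (rep v) x).2))

/-- The sesquilinear form `a₂(u,v) = ∫_Ω u v̄ dx`. -/
def formA2 {H : Type} [NormedAddCommGroup H] [InnerProductSpace ℂ H]
    (rep : H →ₗ[ℂ] ((ℝ × ℝ) → ℂ)) (u v : H) : ℂ :=
  ∫ x in Cell, rep u x * (starRingEnd ℂ) (rep v x)

/-- The compactness of the embedding `H¹(T²) ↪ L²(T²)`: every bounded sequence in `H`
has a subsequence whose representatives form a Cauchy sequence in the `L²(Ω)` norm. -/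
def CompactEmbeddingL2 {H : Type} [NormedAddCommGroup H] [InnerProductSpace ℂ H]
    (rep : H →ₗ[ℂ] ((ℝ × ℝ) → ℂ)) : Prop :=
  ∀ s : ℕ → H, (∃ C : ℝ, ∀ n, ‖s n‖ ≤ C) →
    ∃ φ : ℕ → ℕ, StrictMono φ ∧ ∀ ε > (0:ℝ), ∃ N, ∀ m ≥ N, ∀ n ≥ N,
      (∫ x in Cell, ‖rep (s (φ m) - s (φ n)) x‖ ^ 2) < ε

/-- The Dirichlet form `(u,v) ↦ ∫_{T²} ∇u · ∇v̄ dx`. -/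
def formDirichlet {H : Type} [NormedAddCommGroup H] [InnerProductSpace ℂ H]
    (rep : H →ₗ[ℂ] ((ℝ × ℝ) → ℂ)) (u v : H) : ℂ :=
  ∫ x in Cell, (gradF (rep u) x).1 * (starRingEnd ℂ) ((gradF (rep v) x).1)
    + (gradF (rep u) x).2 * (starRingEnd ℂ) ((gradF (rep v) x).2)

/-- `T` is a Fredholm operator of index zero: closed range, finite-dimensional kernel and
cokernel, and `dim ker T = dim coker T`. -/
def IsFredholmIndexZero {H : Type} [NormedAddCommGroup H] [InnerProductSpace ℂ H]
    (T : H →L[ℂ] H) : Prop :=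
  IsClosed (LinearMap.range (T : H →ₗ[ℂ] H) : Set H) ∧
  FiniteDimensional ℂ (LinearMap.ker (T : H →ₗ[ℂ] H)) ∧
  FiniteDimensional ℂ (H ⧸ LinearMap.range (T : H →ₗ[ℂ] H)) ∧
  Module.finrank ℂ (LinearMap.ker (T : H →ₗ[ℂ] H)) =
    Module.finrank ℂ (H ⧸ LinearMap.range (T : H →ₗ[ℂ] H))

/-!
Write `Q = Q(λ)`. With the `H¹` inner product `⟪v, u⟫ = a₂(u, v) + ∫ ∇u · ∇v̄`, the Dirichlet
part of `a₀` cancels against the identity, so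
`⟪v, (Q - 1) u⟫ = (λ² - 1) a₂(u, v) - ω² ∫ ε u v̄ + λ a₁(u, v)`. Each term is bounded by
`C ‖u‖_{L²} ‖v‖_{H¹}` (Cauchy–Schwarz), hence `‖(Q - 1) u‖ ≤ C ‖u‖_{L²}`, and the compact
embedding `H¹ ↪ L²` makes `K = Q - 1` compact.

A compact operator on a Hilbert space is within norm `< 1` of a finite-rank operator `F`, so
`1 + K = U (1 + U⁻¹ F)` with `U = 1 + (K - F)` invertible. For `T = 1 + G` with `G` of finite
rank, the finite-dimensional space `W = range G` is `T`-invariant, contains `ker T`, maps onto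
`coker T`, and meets `range T` exactly in `T W`; so rank–nullity for `T` on `W` gives index
zero. The range is closed because it contains the closed finite-codimensional subspace `ker G`.
-/

namespace LinearMap

variable {K V : Type*} [Field K] [AddCommGroup V] [Module K V] {T : V →ₗ[K] V}
  {W : Submodule K V}

lemma ker_le_of_forall_sub_mem (hW : ∀ x, x - T x ∈ W) : ker T ≤ W := fun x hx => by
  simpa [mem_ker.mp hx] using hW x

lemma mem_of_apply_mem_of_forall_sub_mem (hW : ∀ x, x - T x ∈ W) {x : V} (hx : T x ∈ W) :
    x ∈ W := by
  simpa using W.add_mem (hW x) hx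

lemma apply_mem_of_forall_sub_mem (hW : ∀ x, x - T x ∈ W) {x : V} (hx : x ∈ W) : T x ∈ W := by
  simpa using W.sub_mem hx (hW x)

lemma range_sup_eq_top_of_forall_sub_mem (hW : ∀ x, x - T x ∈ W) : range T ⊔ W = ⊤ :=
  eq_top_iff.mpr fun x _ => by simpa using Submodule.add_mem_sup (mem_range_self T x) (hW x)

def kerRestrictEquivOfForallSubMem (hW : ∀ x, x - T x ∈ W) :
    ker (T.restrict fun _ => apply_mem_of_forall_sub_mem hW) ≃ₗ[K] ker T :=
  (LinearEquiv.ofEq _ _ (ker_restrict _)).trans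
    (Submodule.comapSubtypeEquivOfLe (ker_le_of_forall_sub_mem hW))

def quotientRangeRestrictEquivOfForallSubMem (hW : ∀ x, x - T x ∈ W) :
    (W ⧸ range (T.restrict fun _ => apply_mem_of_forall_sub_mem hW)) ≃ₗ[K] V ⧸ range T :=
  let π : W →ₗ[K] V ⧸ range T := (range T).mkQ ∘ₗ W.subtype
  have hπ : Function.Surjective π := by
    intro q
    obtain ⟨x, rfl⟩ := (range T).mkQ_surjective q
    have hx : x ∈ range T ⊔ W := (range_sup_eq_top_of_forall_sub_mem hW).symm ▸ Submodule.mem_top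
    obtain ⟨y, hy, w, hw, rfl⟩ := Submodule.mem_sup.mp hx
    refine ⟨⟨w, hw⟩, ?_⟩
    simp [π, (Submodule.Quotient.mk_eq_zero _).mpr hy]
  have hker : ker π = range (T.restrict fun _ => apply_mem_of_forall_sub_mem hW) := by
    ext ⟨x, hx⟩
    simp only [π, mem_ker, coe_comp, Function.comp_apply, Submodule.mkQ_apply,
      Submodule.coe_subtype, Submodule.Quotient.mk_eq_zero, range_restrict, Submodule.mem_comap,
      Submodule.mem_map, mem_range]
    constructor
    · rintro ⟨y, rfl⟩
      exact ⟨y, mem_of_apply_mem_of_forall_sub_mem hW hx, rfl⟩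
    · rintro ⟨y, -, rfl⟩
      exact ⟨y, rfl⟩
  (Submodule.quotEquivOfEq _ _ hker.symm).trans (π.quotKerEquivOfSurjective hπ)

theorem finrank_ker_eq_finrank_quotient_range_of_forall_sub_mem [FiniteDimensional K W]
    (hW : ∀ x, x - T x ∈ W) :
    FiniteDimensional K (ker T) ∧ FiniteDimensional K (V ⧸ range T) ∧
      Module.finrank K (ker T) = Module.finrank K (V ⧸ range T) := by
  have eKer := kerRestrictEquivOfForallSubMem hW
  have eCoker := quotientRangeRestrictEquivOfForallSubMem hW
  refine ⟨eKer.finiteDimensional, eCoker.finiteDimensional, ?_⟩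
  rw [← eKer.finrank_eq, ← eCoker.finrank_eq]
  have := (T.restrict fun _ => apply_mem_of_forall_sub_mem hW).finrank_range_add_finrank_ker
  have := (range (T.restrict fun _ => apply_mem_of_forall_sub_mem hW)).finrank_quotient_add_finrank
  omega

end LinearMap

section Fredholm

variable {H : Type} [NormedAddCommGroup H] [InnerProductSpace ℂ H]

theorem isFredholmIndexZero_one_add_of_finiteDimensional_range (F : H →L[ℂ] H)
    [FiniteDimensional ℂ (LinearMap.range (F : H →ₗ[ℂ] H))] : IsFredholmIndexZero (1 + F) := by
  have hW : ∀ x, x - (1 + F : H →L[ℂ] H) x ∈ LinearMap.range (F : H →ₗ[ℂ] H) := by simp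
  have : FiniteDimensional ℂ (H ⧸ LinearMap.ker (F : H →ₗ[ℂ] H)) :=
    (F : H →ₗ[ℂ] H).quotKerEquivRange.symm.finiteDimensional
  have hker : LinearMap.ker (F : H →ₗ[ℂ] H) ≤ LinearMap.range ((1 + F : H →L[ℂ] H) : H →ₗ[ℂ] H) :=
    fun x hx => ⟨x, by simpa using LinearMap.mem_ker.mp hx⟩
  exact ⟨Submodule.isClosed_mono_of_finiteDimensional_quotient F.isClosed_ker hker,
    LinearMap.finrank_ker_eq_finrank_quotient_range_of_forall_sub_mem hW⟩

theorem IsFredholmIndexZero.equiv_comp (e : H ≃L[ℂ] H) {T : H →L[ℂ] H}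
    (hT : IsFredholmIndexZero T) : IsFredholmIndexZero ((e : H →L[ℂ] H).comp T) := by
  obtain ⟨hclosed, hker, hcoker, hindex⟩ := hT
  have hker_eq : LinearMap.ker (((e : H →L[ℂ] H).comp T : H →L[ℂ] H) : H →ₗ[ℂ] H)
      = LinearMap.ker (T : H →ₗ[ℂ] H) :=
    LinearMap.ker_comp_of_ker_eq_bot _ (LinearMap.ker_eq_bot_of_injective e.injective)
  have hrange_eq : LinearMap.range (((e : H →L[ℂ] H).comp T : H →L[ℂ] H) : H →ₗ[ℂ] H)
      = (LinearMap.range (T : H →ₗ[ℂ] H)).map (e.toLinearEquiv : H →ₗ[ℂ] H) :=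
    LinearMap.range_comp _ _
  let eCoker := Submodule.Quotient.equiv _ _ e.toLinearEquiv hrange_eq.symm
  refine ⟨?_, hker_eq ▸ hker, eCoker.finiteDimensional, ?_⟩
  · rw [hrange_eq, Submodule.map_coe]
    exact e.toHomeomorph.isClosedMap _ hclosed
  · rw [hker_eq, hindex, eCoker.finrank_eq]

theorem IsCompactOperator.exists_finiteDimensional_range_norm_sub_lt {K : H →L[ℂ] H}
    (hK : IsCompactOperator K) {δ : ℝ} (hδ : 0 < δ) :
    ∃ F : H →L[ℂ] H, FiniteDimensional ℂ (LinearMap.range (F : H →ₗ[ℂ] H)) ∧ ‖K - F‖ < δ := by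
  obtain ⟨t, -, ht, hcover⟩ := exists_finite_cover_balls_of_isCompact_closure
    (hK.isCompact_closure_image_closedBall 1) (half_pos hδ)
  set V : Submodule ℂ H := Submodule.span ℂ t
  have : FiniteDimensional ℂ V := FiniteDimensional.span_of_finite ℂ ht
  refine ⟨V.starProjection ∘L K, Submodule.finiteDimensional_of_le (S₂ := V) ?_, ?_⟩
  · rintro _ ⟨x, rfl⟩
    exact (V.orthogonalProjectionOnto (K x)).2
  refine lt_of_le_of_lt (ContinuousLinearMap.opNorm_le_of_unit_norm (half_pos hδ).le
    fun x hx => ?_) (half_lt_self hδ)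
  obtain ⟨y, hyt, hy⟩ := Set.mem_iUnion₂.mp
    (hcover ⟨x, mem_closedBall_zero_iff.mpr hx.le, rfl⟩)
  calc ‖(K - V.starProjection ∘L K) x‖ = ‖K x - V.starProjection (K x)‖ := rfl
    _ ≤ ‖K x - y‖ := by
      rw [Submodule.starProjection_minimal]
      exact ciInf_le ⟨0, Set.forall_mem_range.mpr fun _ => norm_nonneg _⟩
        (⟨y, Submodule.subset_span hyt⟩ : V)
    _ ≤ δ / 2 := (mem_ball_iff_norm.mp hy).le

theorem isFredholmIndexZero_one_add [CompleteSpace H] {K : H →L[ℂ] H} (hK : IsCompactOperator K) :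
    IsFredholmIndexZero (1 + K) := by
  obtain ⟨F, hF, hKF⟩ := hK.exists_finiteDimensional_range_norm_sub_lt one_pos
  let U : (H →L[ℂ] H)ˣ := Units.oneSub (F - K) (by rwa [norm_sub_rev])
  let G : H →L[ℂ] H := ↑U⁻¹ * F
  have : FiniteDimensional ℂ (LinearMap.range (G : H →ₗ[ℂ] H)) := by
    change FiniteDimensional ℂ
      (LinearMap.range (((↑U⁻¹ : H →L[ℂ] H) : H →ₗ[ℂ] H) ∘ₗ (F : H →ₗ[ℂ] H)))
    rw [LinearMap.range_comp]
    infer_instance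
  have hfactor : (ContinuousLinearEquiv.unitsEquiv ℂ H U : H →L[ℂ] H).comp (1 + G) = 1 + K := by
    change (U : H →L[ℂ] H) * (1 + ↑U⁻¹ * F) = 1 + K
    rw [mul_add, mul_one, ← mul_assoc, Units.mul_inv, one_mul, Units.val_oneSub]
    abel
  rw [← hfactor]
  exact (isFredholmIndexZero_one_add_of_finiteDimensional_range _).equiv_comp _

end Fredholm

theorem totallyBounded_of_forall_exists_cauchySeq {X : Type*} [UniformSpace X] {s : Set X}
    (h : ∀ u : ℕ → X, (∀ n, u n ∈ s) → ∃ φ : ℕ → ℕ, StrictMono φ ∧ CauchySeq (u ∘ φ)) :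
    TotallyBounded s := by
  intro V hV
  by_contra! hs
  obtain ⟨u, hu⟩ : ∃ u : ℕ → X, ∀ n, u n ∈ s ∧ ∀ m < n, (u n, u m) ∉ V := by
    simpa [Set.not_subset] using
      Set.seq_of_forall_finite_exists fun t ht => Set.not_subset.mp (hs t ht)
  obtain ⟨φ, hφ, hcauchy⟩ := h u fun n => (hu n).1
  obtain ⟨N, hN⟩ := hcauchy.mem_entourage hV
  exact (hu (φ (N + 1))).2 (φ N) (hφ N.lt_succ_self) (hN (N + 1) N N.le_succ le_rfl)

theorem integral_mul_le_sqrt_mul_sqrt {α : Type*} [MeasurableSpace α] {μ : Measure α}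
    {f g : α → ℝ} (hf0 : ∀ x, 0 ≤ f x) (hg0 : ∀ x, 0 ≤ g x) (hf : MemLp f 2 μ)
    (hg : MemLp g 2 μ) :
    ∫ x, f x * g x ∂μ ≤ √(∫ x, f x ^ 2 ∂μ) * √(∫ x, g x ^ 2 ∂μ) := by
  have h := integral_mul_le_Lp_mul_Lq_of_nonneg Real.HolderConjugate.two_two
    (Filter.Eventually.of_forall hf0) (Filter.Eventually.of_forall hg0)
    (by rwa [ENNReal.ofReal_ofNat]) (by rwa [ENNReal.ofReal_ofNat])
  simpa only [Real.rpow_two, ← Real.sqrt_eq_rpow] using h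

theorem norm_le_of_forall_norm_inner_le {𝕜 E : Type*} [RCLike 𝕜] [NormedAddCommGroup E]
    [InnerProductSpace 𝕜 E] {x : E} {M : ℝ} (hM : 0 ≤ M) (h : ∀ v, ‖⟪v, x⟫_𝕜‖ ≤ M * ‖v‖) :
    ‖x‖ ≤ M := by
  rcases eq_or_ne x 0 with rfl | hx
  · simpa using hM
  · have hx' := h x
    rw [inner_self_eq_norm_sq_to_K, norm_pow, RCLike.norm_ofReal, abs_norm, sq] at hx'
    exact le_of_mul_le_mul_right hx' (norm_pos_iff.mpr hx)

section H1Model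

variable {H : Type} [NormedAddCommGroup H] [InnerProductSpace ℂ H]
  (rep : H →ₗ[ℂ] ((ℝ × ℝ) → ℂ))

def h1Density (u v : H) (x : ℝ × ℝ) : ℂ :=
  rep u x * (starRingEnd ℂ) (rep v x)
    + (gradF (rep u) x).1 * (starRingEnd ℂ) ((gradF (rep v) x).1)
    + (gradF (rep u) x).2 * (starRingEnd ℂ) ((gradF (rep v) x).2)

def h1Energy (u : H) (x : ℝ × ℝ) : ℝ :=
  ‖rep u x‖ ^ 2 + ‖(gradF (rep u) x).1‖ ^ 2 + ‖(gradF (rep u) x).2‖ ^ 2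

lemma h1Density_self (u : H) (x : ℝ × ℝ) : h1Density rep u u x = h1Energy rep u x := by
  simp only [h1Density, h1Energy, Complex.mul_conj']
  push_cast
  ring

lemma h1Energy_nonneg (u : H) (x : ℝ × ℝ) : 0 ≤ h1Energy rep u x := by
  unfold h1Energy
  positivity

lemma norm_rep_sq_le_h1Energy (u : H) (x : ℝ × ℝ) : ‖rep u x‖ ^ 2 ≤ h1Energy rep u x := by
  unfold h1Energy
  nlinarith [sq_nonneg ‖(gradF (rep u) x).1‖, sq_nonneg ‖(gradF (rep u) x).2‖]

lemma norm_rep_le_sqrt_h1Energy (u : H) (x : ℝ × ℝ) : ‖rep u x‖ ≤ √(h1Energy rep u x) :=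
  Real.le_sqrt_of_sq_le (norm_rep_sq_le_h1Energy rep u x)

lemma norm_gradF_fst_le_sqrt_h1Energy (u : H) (x : ℝ × ℝ) :
    ‖(gradF (rep u) x).1‖ ≤ √(h1Energy rep u x) := by
  refine Real.le_sqrt_of_sq_le ?_
  unfold h1Energy
  nlinarith [sq_nonneg ‖rep u x‖, sq_nonneg ‖(gradF (rep u) x).2‖]

lemma norm_gradF_snd_le_sqrt_h1Energy (u : H) (x : ℝ × ℝ) :
    ‖(gradF (rep u) x).2‖ ≤ √(h1Energy rep u x) := by
  refine Real.le_sqrt_of_sq_le ?_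
  unfold h1Energy
  nlinarith [sq_nonneg ‖rep u x‖, sq_nonneg ‖(gradF (rep u) x).1‖]

variable {μ : Measure (ℝ × ℝ)}
  (hinner : ∀ u v : H, ⟪v, u⟫_ℂ = ∫ x, h1Density rep u v x ∂μ)
include hinner

lemma integrable_h1Energy (u : H) : Integrable (h1Energy rep u) μ := by
  have h : Integrable (h1Density rep u u) μ := by
    -- otherwise the integral is the junk value `0`, so `‖u‖ ^ 2 = 0`
    by_contra hu
    have : u = 0 := inner_self_eq_zero.mp ((hinner u u).trans (integral_undef hu))
    have h0 : h1Density rep 0 0 = 0 := by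
      funext x
      simp [h1Density, gradF]
    exact hu (this ▸ h0 ▸ integrable_zero _ _ μ)
  simpa [h1Density_self] using h.re

lemma integral_h1Energy (u : H) : ∫ x, h1Energy rep u x ∂μ = ‖u‖ ^ 2 := by
  have h := hinner u u
  simp only [h1Density_self] at h
  rw [integral_complex_ofReal, inner_self_eq_norm_sq_to_K] at h
  exact Complex.ofReal_injective (by simpa using h.symm)

/-- `rep u` itself need not be measurable, but `‖rep u‖ ^ 2` is: it is the integrable energy
minus the squared partial derivatives, which are measurable as `fderiv` always is. -/
lemma integrable_norm_rep_sq (u : H) : Integrable (fun x => ‖rep u x‖ ^ 2) μ := by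
  refine (integrable_h1Energy rep hinner u).mono' ?_ (Filter.Eventually.of_forall fun x => ?_)
  · have hm := (((integrable_h1Energy rep hinner u).aestronglyMeasurable.sub
      ((measurable_fderiv_apply_const ℝ (rep u) (1, 0)).norm.pow_const 2).aestronglyMeasurable).sub
      ((measurable_fderiv_apply_const ℝ (rep u) (0, 1)).norm.pow_const 2).aestronglyMeasurable)
    refine hm.congr (Filter.Eventually.of_forall fun x => ?_)
    simp only [Pi.sub_apply, h1Energy, gradF]
    ring
  · rw [Real.norm_of_nonneg (by positivity)]
    exact norm_rep_sq_le_h1Energy rep u x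

lemma integrable_mul_conj (u v : H) :
    Integrable (fun x => rep u x * (starRingEnd ℂ) (rep v x)) μ := by
  have hsq : ∀ w, Integrable (fun x => (‖rep w x‖ : ℂ) ^ 2) μ := fun w => by
    simpa using (integrable_norm_rep_sq rep hinner w).ofReal (𝕜 := ℂ)
  -- polarization expresses the product through the integrable `‖rep w‖ ^ 2`
  have hpol : ∀ x, rep u x * (starRingEnd ℂ) (rep v x) =
      ((‖rep (v + u) x‖ : ℂ) ^ 2 - (‖rep (v - u) x‖ : ℂ) ^ 2
        + ((‖rep (v - I • u) x‖ : ℂ) ^ 2 - (‖rep (v + I • u) x‖ : ℂ) ^ 2) * I) / 4 := fun x => by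
    simpa [mul_comm] using inner_eq_sum_norm_sq_div_four (𝕜 := ℂ) (rep v x) (rep u x)
  simp_rw [hpol]
  exact ((((hsq _).sub (hsq _)).add (((hsq _).sub (hsq _)).mul_const I))).div_const 4

lemma memLp_norm_rep (u : H) : MemLp (fun x => ‖rep u x‖) 2 μ := by
  have hm : AEStronglyMeasurable (fun x => ‖rep u x‖) μ := by
    refine (integrable_norm_rep_sq rep hinner u).aemeasurable.sqrt.aestronglyMeasurable.congr
      (Filter.Eventually.of_forall fun x => ?_)
    simp
  exact (memLp_two_iff_integrable_sq hm).mpr (integrable_norm_rep_sq rep hinner u)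

lemma memLp_sqrt_h1Energy (u : H) : MemLp (fun x => √(h1Energy rep u x)) 2 μ := by
  refine (memLp_two_iff_integrable_sq
    (integrable_h1Energy rep hinner u).aemeasurable.sqrt.aestronglyMeasurable).mpr ?_
  simpa [Real.sq_sqrt (h1Energy_nonneg rep u _)] using integrable_h1Energy rep hinner u

theorem norm_integral_le_of_norm_le_mul_sqrt_h1Energy {f : ℝ × ℝ → ℂ} {c : ℝ} (hc : 0 ≤ c)
    (d v : H) (hf : ∀ x, ‖f x‖ ≤ c * (‖rep d x‖ * √(h1Energy rep v x))) :
    ‖∫ x, f x ∂μ‖ ≤ c * (√(∫ x, ‖rep d x‖ ^ 2 ∂μ) * ‖v‖) := by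
  have hint : Integrable (fun x => ‖rep d x‖ * √(h1Energy rep v x)) μ :=
    (memLp_norm_rep rep hinner d).integrable_mul (memLp_sqrt_h1Energy rep hinner v)
  have hv : √(∫ x, √(h1Energy rep v x) ^ 2 ∂μ) = ‖v‖ := by
    simp_rw [Real.sq_sqrt (h1Energy_nonneg rep v _), integral_h1Energy rep hinner v]
    exact Real.sqrt_sq (norm_nonneg v)
  calc ‖∫ x, f x ∂μ‖ ≤ ∫ x, ‖f x‖ ∂μ := norm_integral_le_integral_norm _
    _ ≤ ∫ x, c * (‖rep d x‖ * √(h1Energy rep v x)) ∂μ :=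
      integral_mono_of_nonneg (Filter.Eventually.of_forall fun _ => norm_nonneg _)
        (hint.const_mul c) (Filter.Eventually.of_forall hf)
    _ = c * ∫ x, ‖rep d x‖ * √(h1Energy rep v x) ∂μ := integral_const_mul _ _
    _ ≤ c * (√(∫ x, ‖rep d x‖ ^ 2 ∂μ) * ‖v‖) := by
      rw [← hv]
      gcongr
      exact integral_mul_le_sqrt_mul_sqrt (fun _ => norm_nonneg _) (fun _ => Real.sqrt_nonneg _)
        (memLp_norm_rep rep hinner d) (memLp_sqrt_h1Energy rep hinner v)

end H1Model

section Forms

variable {H : Type} [NormedAddCommGroup H] [InnerProductSpace ℂ H]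
  {rep : H →ₗ[ℂ] ((ℝ × ℝ) → ℂ)}
  (hinner : ∀ u v : H, ⟪v, u⟫_ℂ = ∫ x in Cell, h1Density rep u v x)
include hinner

theorem formDirichlet_eq_inner_sub_formA2 (u v : H) :
    formDirichlet rep u v = ⟪v, u⟫_ℂ - formA2 rep u v := by
  have hconj := Complex.continuous_conj.measurable
  have hgrad : Integrable (fun x => (gradF (rep u) x).1 * (starRingEnd ℂ) ((gradF (rep v) x).1)
      + (gradF (rep u) x).2 * (starRingEnd ℂ) ((gradF (rep v) x).2)) (volume.restrict Cell) := by
    refine ((integrable_h1Energy rep hinner u).add (integrable_h1Energy rep hinner v)).mono' ?_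
      (Filter.Eventually.of_forall fun x => ?_)
    · exact (((measurable_fderiv_apply_const ℝ (rep u) (1, 0)).mul
        (hconj.comp (measurable_fderiv_apply_const ℝ (rep v) (1, 0)))).add
        ((measurable_fderiv_apply_const ℝ (rep u) (0, 1)).mul
        (hconj.comp (measurable_fderiv_apply_const ℝ (rep v) (0, 1))))).aestronglyMeasurable
    · have hu := Real.sq_sqrt (h1Energy_nonneg rep u x)
      have hv := Real.sq_sqrt (h1Energy_nonneg rep v x)
      calc _ ≤ ‖(gradF (rep u) x).1‖ * ‖(gradF (rep v) x).1‖
            + ‖(gradF (rep u) x).2‖ * ‖(gradF (rep v) x).2‖ := by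
            refine (norm_add_le _ _).trans_eq ?_
            rw [norm_mul, norm_mul, RCLike.norm_conj, RCLike.norm_conj]
        _ ≤ √(h1Energy rep u x) * √(h1Energy rep v x)
            + √(h1Energy rep u x) * √(h1Energy rep v x) := by
            gcongr
            exacts [norm_gradF_fst_le_sqrt_h1Energy rep u x,
              norm_gradF_fst_le_sqrt_h1Energy rep v x, norm_gradF_snd_le_sqrt_h1Energy rep u x,
              norm_gradF_snd_le_sqrt_h1Energy rep v x]
        _ ≤ h1Energy rep u x + h1Energy rep v x := by
            nlinarith [sq_nonneg (√(h1Energy rep u x) - √(h1Energy rep v x))]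
  rw [hinner, formDirichlet, formA2, eq_sub_iff_add_eq, ← integral_add hgrad
    (integrable_mul_conj rep hinner u v)]
  refine integral_congr_ae (Filter.Eventually.of_forall fun x => ?_)
  simp only [h1Density]
  ring

theorem norm_formA2_le (d v : H) :
    ‖formA2 rep d v‖ ≤ √(∫ x in Cell, ‖rep d x‖ ^ 2) * ‖v‖ := by
  have h := norm_integral_le_of_norm_le_mul_sqrt_h1Energy rep hinner zero_le_one d v
    (f := fun x => rep d x * (starRingEnd ℂ) (rep v x)) fun x => by
      rw [norm_mul, RCLike.norm_conj, one_mul]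
      exact mul_le_mul_of_nonneg_left (norm_rep_le_sqrt_h1Energy rep v x) (norm_nonneg _)
  rwa [one_mul] at h

theorem norm_integral_mul_mul_conj_le {ε : ℝ × ℝ → ℝ} {c : ℝ} (hc : ∀ x, |ε x| ≤ c) (d v : H) :
    ‖∫ x in Cell, (ε x : ℂ) * rep d x * (starRingEnd ℂ) (rep v x)‖
      ≤ c * (√(∫ x in Cell, ‖rep d x‖ ^ 2) * ‖v‖) := by
  refine norm_integral_le_of_norm_le_mul_sqrt_h1Energy rep hinner ((abs_nonneg _).trans (hc 0))
    d v fun x => ?_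
  rw [norm_mul, norm_mul, Complex.norm_real, Real.norm_eq_abs, RCLike.norm_conj, mul_assoc]
  exact mul_le_mul (hc x)
    (mul_le_mul_of_nonneg_left (norm_rep_le_sqrt_h1Energy rep v x) (norm_nonneg _))
    (by positivity) ((abs_nonneg _).trans (hc x))

theorem norm_formA1_le (k1 k2 : ℝ) (d v : H) :
    ‖formA1 rep k1 k2 d v‖ ≤ 2 * (|k1| + |k2|) * (√(∫ x in Cell, ‖rep d x‖ ^ 2) * ‖v‖) := by
  have h := norm_integral_le_of_norm_le_mul_sqrt_h1Energy rep hinner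
    (add_nonneg (abs_nonneg k1) (abs_nonneg k2)) d v
    (f := fun x => rep d x * ((k1 : ℂ) * (starRingEnd ℂ) ((gradF (rep v) x).1)
      + (k2 : ℂ) * (starRingEnd ℂ) ((gradF (rep v) x).2))) fun x => by
    calc _ ≤ ‖rep d x‖ * (|k1| * ‖(gradF (rep v) x).1‖ + |k2| * ‖(gradF (rep v) x).2‖) := by
          rw [norm_mul]
          refine mul_le_mul_of_nonneg_left ((norm_add_le _ _).trans_eq ?_) (norm_nonneg _)
          simp only [norm_mul, RCLike.norm_conj, Complex.norm_real, Real.norm_eq_abs]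
      _ ≤ ‖rep d x‖ * (|k1| * √(h1Energy rep v x) + |k2| * √(h1Energy rep v x)) := by
          gcongr
          exacts [norm_gradF_fst_le_sqrt_h1Energy rep v x, norm_gradF_snd_le_sqrt_h1Energy rep v x]
      _ = (|k1| + |k2|) * (‖rep d x‖ * √(h1Energy rep v x)) := by ring
  rw [formA1, norm_mul, mul_assoc]
  gcongr
  simp

end Forms

theorem isCompactOperator_of_norm_le_sqrt_integral {H : Type} [NormedAddCommGroup H]
    [InnerProductSpace ℂ H] [CompleteSpace H] {rep : H →ₗ[ℂ] ((ℝ × ℝ) → ℂ)}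
    (hcpt : CompactEmbeddingL2 rep) {K : H →L[ℂ] H} {C : ℝ}
    (hK : ∀ u, ‖K u‖ ≤ C * √(∫ x in Cell, ‖rep u x‖ ^ 2)) : IsCompactOperator K := by
  refine (isCompactOperator_iff_isCompact_closure_image_closedBall (K : H →ₗ[ℂ] H) one_pos).mpr ?_
  refine (TotallyBounded.closure ?_).isCompact_of_isClosed isClosed_closure
  refine totallyBounded_of_forall_exists_cauchySeq fun y hy => ?_
  choose w hw hwy using hy
  obtain ⟨φ, hφ, hcauchy⟩ := hcpt w ⟨1, fun n => mem_closedBall_zero_iff.mp (hw n)⟩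
  refine ⟨φ, hφ, Metric.cauchySeq_iff.mpr fun δ hδ => ?_⟩
  have hC : 0 < |C| + 1 := by positivity
  obtain ⟨N, hN⟩ := hcauchy ((δ / (|C| + 1)) ^ 2) (by positivity)
  refine ⟨N, fun m hm n hn => ?_⟩
  have hsqrt : √(∫ x in Cell, ‖rep (w (φ m) - w (φ n)) x‖ ^ 2) < δ / (|C| + 1) :=
    Real.sqrt_lt' (by positivity) |>.mpr (hN m hm n hn)
  calc dist ((y ∘ φ) m) ((y ∘ φ) n) = ‖K (w (φ m) - w (φ n))‖ := by
        simp [← hwy, dist_eq_norm, map_sub]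
    _ ≤ C * √(∫ x in Cell, ‖rep (w (φ m) - w (φ n)) x‖ ^ 2) := hK _
    _ ≤ (|C| + 1) * √(∫ x in Cell, ‖rep (w (φ m) - w (φ n)) x‖ ^ 2) := by
        gcongr
        linarith [le_abs_self C]
    _ < δ := (lt_div_iff₀' hC).mp hsqrt

section Pencil

variable {H : Type} [NormedAddCommGroup H] [InnerProductSpace ℂ H]
  {rep : H →ₗ[ℂ] ((ℝ × ℝ) → ℂ)}
  (hinner : ∀ u v : H, ⟪v, u⟫_ℂ = ∫ x in Cell, h1Density rep u v x)
  {ε : ℝ × ℝ → ℝ} {ω k1 k2 : ℝ} {A0 A1 A2 : H →L[ℂ] H}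
  (hA0 : ∀ u v : H, ⟪v, A0 u⟫_ℂ = formDirichlet rep u v
    - (ω : ℂ) ^ 2 * ∫ x in Cell, (ε x : ℂ) * rep u x * (starRingEnd ℂ) (rep v x))
  (hA1 : ∀ u v : H, ⟪v, A1 u⟫_ℂ = formA1 rep k1 k2 u v)
  (hA2 : ∀ u v : H, ⟪v, A2 u⟫_ℂ = formA2 rep u v)
include hinner hA0 hA1 hA2

theorem inner_pencil_sub_one_apply (lam : ℂ) (d v : H) :
    ⟪v, (A0 + lam • A1 + lam ^ 2 • A2 - 1 : H →L[ℂ] H) d⟫_ℂ = (lam ^ 2 - 1) * formA2 rep d v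
      - (ω : ℂ) ^ 2 * (∫ x in Cell, (ε x : ℂ) * rep d x * (starRingEnd ℂ) (rep v x))
      + lam * formA1 rep k1 k2 d v := by
  simp only [sub_apply, add_apply, smul_apply, one_apply_eq_self, inner_sub_right,
    inner_add_right, inner_smul_right, hA0, hA1, hA2, formDirichlet_eq_inner_sub_formA2 hinner]
  ring

theorem norm_pencil_sub_one_apply_le {c : ℝ} (hc : ∀ x, |ε x| ≤ c) (lam : ℂ) (d : H) :
    ‖(A0 + lam • A1 + lam ^ 2 • A2 - 1 : H →L[ℂ] H) d‖
      ≤ (‖lam ^ 2 - 1‖ + ω ^ 2 * c + ‖lam‖ * (2 * (|k1| + |k2|)))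
        * √(∫ x in Cell, ‖rep d x‖ ^ 2) := by
  have hc0 : 0 ≤ c := (abs_nonneg _).trans (hc 0)
  set L := √(∫ x in Cell, ‖rep d x‖ ^ 2)
  refine norm_le_of_forall_norm_inner_le (𝕜 := ℂ) (by positivity) fun v => ?_
  rw [inner_pencil_sub_one_apply hinner hA0 hA1 hA2]
  calc _ ≤ ‖lam ^ 2 - 1‖ * ‖formA2 rep d v‖
        + ω ^ 2 * ‖∫ x in Cell, (ε x : ℂ) * rep d x * (starRingEnd ℂ) (rep v x)‖
        + ‖lam‖ * ‖formA1 rep k1 k2 d v‖ := by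
        refine ((norm_add_le _ _).trans (add_le_add (norm_sub_le _ _) le_rfl)).trans_eq ?_
        simp
    _ ≤ ‖lam ^ 2 - 1‖ * (L * ‖v‖) + ω ^ 2 * (c * (L * ‖v‖))
        + ‖lam‖ * (2 * (|k1| + |k2|) * (L * ‖v‖)) := by
        gcongr
        exacts [norm_formA2_le hinner d v, norm_integral_mul_mul_conj_le hinner hc d v,
          norm_formA1_le hinner k1 k2 d v]
    _ = (‖lam ^ 2 - 1‖ + ω ^ 2 * c + ‖lam‖ * (2 * (|k1| + |k2|))) * L * ‖v‖ := by ring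

end Pencil

theorem statement8_general (H : Type) [NormedAddCommGroup H] [InnerProductSpace ℂ H] [CompleteSpace H]
    (rep : H →ₗ[ℂ] ((ℝ × ℝ) → ℂ)) (hmodel : IsH1TorusModel H rep)
    (hcpt : CompactEmbeddingL2 rep)
    (ε : ℝ × ℝ → ℝ) (hbd : ∃ c : ℝ, ∀ x, |ε x| ≤ c)
    (ω : ℝ)
    (k1 k2 : ℝ)
    (A0 A1 A2 : H →L[ℂ] H)
    (hA0 : ∀ u v : H, ⟪v, A0 u⟫_ℂ = formDirichlet rep u v
      - (ω : ℂ) ^ 2 * ∫ x in Cell, (ε x : ℂ) * rep u x * (starRingEnd ℂ) (rep v x))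
    (hA1 : ∀ u v : H, ⟪v, A1 u⟫_ℂ = formA1 rep k1 k2 u v)
    (hA2 : ∀ u v : H, ⟪v, A2 u⟫_ℂ = formA2 rep u v) :
    ∀ lam : ℂ, IsFredholmIndexZero (A0 + lam • A1 + lam ^ 2 • A2) := by
  intro lam
  obtain ⟨c, hc⟩ := hbd
  have hcompact := isCompactOperator_of_norm_le_sqrt_integral hcpt
    (norm_pencil_sub_one_apply_le hmodel.inner_eq hA0 hA1 hA2 hc lam)
  simpa using isFredholmIndexZero_one_add hcompact

/-- for every `λ ∈ ℂ`, the operator `Q(λ) = A₀ + λA₁ + λ²A₂` on `H¹(T²)` is a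
Fredholm operator of index zero, where `A₀, A₁, A₂` are defined via Riesz representation by
the forms `a₀(u,v) = ∫ ∇u·∇v̄ - ω²ε u v̄ dx`, `a₁(u,v) = 2i ∫ u k̂·∇v̄ dx`,
`a₂(u,v) = ∫ u v̄ dx`. -/
theorem statement8 (H : Type) [NormedAddCommGroup H] [InnerProductSpace ℂ H] [CompleteSpace H]
    (rep : H →ₗ[ℂ] ((ℝ × ℝ) → ℂ)) (hmodel : IsH1TorusModel H rep)
    (hcpt : CompactEmbeddingL2 rep)
    (ε : ℝ × ℝ → ℝ) (hmeas : Measurable ε) (hbd : ∃ c : ℝ, ∀ x, |ε x| ≤ c)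
    (hper : PeriodicT2 (fun x => (ε x : ℂ))) (ω : ℝ)
    (k1 k2 : ℝ) (hk : k1 ^ 2 + k2 ^ 2 = 1)
    (A0 A1 A2 : H →L[ℂ] H)
    (hA0 : ∀ u v : H, ⟪v, A0 u⟫_ℂ = formDirichlet rep u v
      - (ω : ℂ) ^ 2 * ∫ x in Cell, (ε x : ℂ) * rep u x * (starRingEnd ℂ) (rep v x))
    (hA1 : ∀ u v : H, ⟪v, A1 u⟫_ℂ = formA1 rep k1 k2 u v)
    (hA2 : ∀ u v : H, ⟪v, A2 u⟫_ℂ = formA2 rep u v) :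
    ∀ lam : ℂ, IsFredholmIndexZero (A0 + lam • A1 + lam ^ 2 • A2) :=
  statement8_general H rep hmodel hcpt ε hbd ω k1 k2 A0 A1 A2 hA0 hA1 hA2
end
end

section
/- Let W be a real 2N×2N Hamiltonian matrix ((WJ)ᵀ = WJ) and μ_0 ∈ C such that ±μ_0 and ±conj(μ_0) are not eigenvalues of W. Then R = (W - μ_0 I)⁻¹(W + μ_0 I)⁻¹(W - conj(μ_0) I)⁻¹(W + conj(μ_0) I)⁻¹ is skew-Hamiltonian: (RJ)ᵀ = -RJ. Moreover R is a real matrix. -/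
/-!
Write `J` for the symplectic form. A Hamiltonian `W` satisfies `J Wᵀ = -W J`, so `W²` satisfies
`J (W²)ᵀ = W² J`, i.e. `W²` is skew-Hamiltonian. Pairing the factors as
`(W + μ)(W - μ) = W² - μ²`, the matrix `R` is the inverse of the product of the two commuting
skew-Hamiltonian matrices `W² - (conj μ)²` and `W² - μ²`, hence skew-Hamiltonian. Complex conjugation
swaps these two factors, so `R` is real.
-/

open Matrix

namespace Matrix

variable {m K : Type*} [Fintype m] [CommRing K]

def IsHamiltonian (J W : Matrix m m K) : Prop := (W * J)ᵀ = W * J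

def IsSkewHamiltonian (J M : Matrix m m K) : Prop := (M * J)ᵀ = -(M * J)

theorem IsHamiltonian.map {L : Type*} [CommRing L] {J W : Matrix m m K} (hW : IsHamiltonian J W)
    (f : K →+* L) : IsHamiltonian (J.map f) (W.map f) := by
  rw [IsHamiltonian, ← Matrix.map_mul, ← transpose_map, hW]

section SkewSymmetricForm

variable {J : Matrix m m K} (hJ : Jᵀ = -J)
include hJ

theorem isHamiltonian_iff {W : Matrix m m K} : IsHamiltonian J W ↔ J * Wᵀ = -(W * J) := by
  rw [IsHamiltonian, transpose_mul, hJ, neg_mul, neg_eq_iff_eq_neg]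

theorem isSkewHamiltonian_iff {M : Matrix m m K} : IsSkewHamiltonian J M ↔ J * Mᵀ = M * J := by
  rw [IsSkewHamiltonian, transpose_mul, hJ, neg_mul, neg_inj]

theorem IsHamiltonian.isSkewHamiltonian_mul_self {W : Matrix m m K} (hW : IsHamiltonian J W) :
    IsSkewHamiltonian J (W * W) := by
  rw [isHamiltonian_iff hJ] at hW
  rw [isSkewHamiltonian_iff hJ, transpose_mul, ← Matrix.mul_assoc, hW, neg_mul,
    Matrix.mul_assoc, hW, Matrix.mul_neg, neg_neg, Matrix.mul_assoc]

theorem IsSkewHamiltonian.mul {M N : Matrix m m K} (hM : IsSkewHamiltonian J M)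
    (hN : IsSkewHamiltonian J N) (hMN : Commute M N) : IsSkewHamiltonian J (M * N) := by
  rw [isSkewHamiltonian_iff hJ] at hM hN ⊢
  rw [transpose_mul, ← Matrix.mul_assoc, hN, Matrix.mul_assoc, hM, ← Matrix.mul_assoc, hMN.eq]

variable [DecidableEq m]

theorem IsSkewHamiltonian.sub_smul_one {M : Matrix m m K} (hM : IsSkewHamiltonian J M) (c : K) :
    IsSkewHamiltonian J (M - c • 1) := by
  rw [isSkewHamiltonian_iff hJ] at hM ⊢
  rw [transpose_sub, transpose_smul, transpose_one, Matrix.mul_sub, Matrix.sub_mul, hM,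
    Matrix.mul_smul, Matrix.smul_mul, Matrix.mul_one, Matrix.one_mul]

theorem IsSkewHamiltonian.inv (hJu : IsUnit J.det) {M : Matrix m m K}
    (hM : IsSkewHamiltonian J M) : IsSkewHamiltonian J M⁻¹ := by
  rw [isSkewHamiltonian_iff hJ] at hM ⊢
  have hMt : Mᵀ = J⁻¹ * M * J := by
    rw [Matrix.mul_assoc, ← hM, ← Matrix.mul_assoc, nonsing_inv_mul _ hJu, Matrix.one_mul]
  rw [transpose_nonsing_inv, hMt, Matrix.mul_inv_rev, Matrix.mul_inv_rev,
    nonsing_inv_nonsing_inv _ hJu, ← Matrix.mul_assoc, ← Matrix.mul_assoc,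
    mul_nonsing_inv _ hJu, Matrix.one_mul]

end SkewSymmetricForm

variable [DecidableEq m]

theorem add_smul_one_mul_sub_smul_one (A : Matrix m m K) (c : K) :
    (A + c • 1) * (A - c • 1) = A * A - (c * c) • 1 := by
  rw [← ((Commute.one_right A).smul_right c).mul_self_sub_mul_self_eq, smul_mul_smul_comm,
    Matrix.one_mul]

theorem commute_sub_smul_one_sub_smul_one (A : Matrix m m K) (a b : K) :
    Commute (A - a • 1) (A - b • 1) :=
  ((Commute.refl A).sub_right ((Commute.one_right A).smul_right b)).sub_left
    ((Commute.one_left _).smul_left a)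

theorem map_starRingEnd_nonsing_inv [StarRing K] (M : Matrix m m K) :
    M⁻¹.map (starRingEnd K) = (M.map (starRingEnd K))⁻¹ := by
  have h (A : Matrix m m K) : A.map (starRingEnd K) = Aᴴᵀ := rfl
  rw [h, h, conjTranspose_nonsing_inv, transpose_nonsing_inv]

end Matrix

theorem statement18_general (N : ℕ) (W : Matrix (Fin N ⊕ Fin N) (Fin N ⊕ Fin N) ℝ)
    (J : Matrix (Fin N ⊕ Fin N) (Fin N ⊕ Fin N) ℝ) (hJ : J = fromBlocks 0 1 (-1) 0)
    (hW : (W * J)ᵀ = W * J)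
    (mu0 : ℂ)
    (R : Matrix (Fin N ⊕ Fin N) (Fin N ⊕ Fin N) ℂ)
    (hR : R = (W.map Complex.ofReal - mu0 • 1)⁻¹ * (W.map Complex.ofReal + mu0 • 1)⁻¹ *
      (W.map Complex.ofReal - (starRingEnd ℂ) mu0 • 1)⁻¹ *
      (W.map Complex.ofReal + (starRingEnd ℂ) mu0 • 1)⁻¹) :
    (R * J.map Complex.ofReal)ᵀ = -(R * J.map Complex.ofReal) ∧
      ∀ i j, (starRingEnd ℂ) (R i j) = R i j := by
  set Wc := W.map Complex.ofReal
  set Jc := J.map Complex.ofReal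
  set P : ℂ → Matrix (Fin N ⊕ Fin N) (Fin N ⊕ Fin N) ℂ := fun c => Wc * Wc - (c * c) • 1
  have hJc : Jc = -Matrix.J (Fin N) ℂ := by
    simp [Jc, hJ, Matrix.J, fromBlocks_map, fromBlocks_neg, Matrix.map_neg, Matrix.map_one]
  have hJct : Jcᵀ = -Jc := by rw [hJc, transpose_neg, J_transpose]
  have hJcu : IsUnit Jc.det := isUnit_det_of_right_inverse (B := -Jc) (by simp [hJc, J_squared])
  have hRP : R = (P (starRingEnd ℂ mu0) * P mu0)⁻¹ := by
    simp only [P, hR, ← add_smul_one_mul_sub_smul_one, Matrix.mul_inv_rev, Matrix.mul_assoc]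
  have hP (c : ℂ) : IsSkewHamiltonian Jc (P c) :=
    ((IsHamiltonian.map hW Complex.ofRealHom).isSkewHamiltonian_mul_self hJct).sub_smul_one hJct _
  have hcomm : Commute (P (starRingEnd ℂ mu0)) (P mu0) := commute_sub_smul_one_sub_smul_one _ _ _
  have hPconj (c : ℂ) : (P c).map (starRingEnd ℂ) = P (starRingEnd ℂ c) := by
    ext i j
    by_cases h : i = j <;> simp [P, Wc, Matrix.mul_apply, one_apply, h]
  have hreal : R.map (starRingEnd ℂ) = R := by
    rw [hRP, map_starRingEnd_nonsing_inv, Matrix.map_mul, hPconj, hPconj, Complex.conj_conj,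
      hcomm.eq]
  refine ⟨?_, fun i j => congrFun (congrFun hreal i) j⟩
  rw [hRP]
  exact ((hP _).mul hJct (hP _) hcomm).inv hJct hJcu

/-- let `W` be a real `2N×2N` Hamiltonian matrix (`(WJ)ᵀ = WJ`) and
`μ₀ ∈ ℂ` such that none of `±μ₀, ±conj μ₀` is an eigenvalue of `W`. Then
`R = (W-μ₀)⁻¹(W+μ₀)⁻¹(W-conj μ₀)⁻¹(W+conj μ₀)⁻¹` is skew-Hamiltonian, `(RJ)ᵀ = -RJ`,
and `R` is a real matrix. -/
theorem statement18 (N : ℕ) (W : Matrix (Fin N ⊕ Fin N) (Fin N ⊕ Fin N) ℝ)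
    (J : Matrix (Fin N ⊕ Fin N) (Fin N ⊕ Fin N) ℝ) (hJ : J = fromBlocks 0 1 (-1) 0)
    (hW : (W * J)ᵀ = W * J)
    (mu0 : ℂ)
    (hreg : ∀ mu ∈ ({mu0, -mu0, (starRingEnd ℂ) mu0, -(starRingEnd ℂ) mu0} : Set ℂ),
      (W.map Complex.ofReal - mu • 1).det ≠ 0)
    (R : Matrix (Fin N ⊕ Fin N) (Fin N ⊕ Fin N) ℂ)
    (hR : R = (W.map Complex.ofReal - mu0 • 1)⁻¹ * (W.map Complex.ofReal + mu0 • 1)⁻¹ *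
      (W.map Complex.ofReal - (starRingEnd ℂ) mu0 • 1)⁻¹ *
      (W.map Complex.ofReal + (starRingEnd ℂ) mu0 • 1)⁻¹) :
    (R * J.map Complex.ofReal)ᵀ = -(R * J.map Complex.ofReal) ∧
      ∀ i j, (starRingEnd ℂ) (R i j) = R i j :=
  statement18_general N W J hJ hW mu0 R hR
end
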